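/- For every i ∈ {1,…,M} and every n ≥ 1, min_{π ∈ Π_M} E∫_ℝ |f̂_{π(i)}(t) − f_i(t)| dt ≤ E∫_ℝ |f̄_i(t) − f_i(t)| dt + (4‖K‖₁/α_i)·min_{π ∈ Π_M} φ_n(π) + (2√6·‖K‖₁/α_i)·exp(−n·α_i²/4) + ‖K‖₁·(1−α_i)^n, where Π_M denotes the set of all permutations of {1,…,M} and φ_n(π) = max_{1≤k≤n} P(π(Î_k) ≠ I_k) is the maximal misclassification error after permuting the predicted labels by π. -/

import Mathlib

/-!
Fix a relabelling `σ` of the predicted labels attaining `min_π φ_n(π)`. For every sample, the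
two-step estimate `f̂_{σ⁻¹ i}` and the oracle `f̄_i` are averages of the rescaled kernels
`K_h(·, Y_k)` over the index sets `Ŝ = {k | σ(Î_k) = i}` and `S = {k | I_k = i}`. Since every
rescaled kernel has `L¹` norm `‖K‖₁`, their `L¹` distance is at most `2‖K‖₁ #(Ŝ ∆ S) / #S`, and
it is always at most `2‖K‖₁`. Every index of `Ŝ ∆ S` is misclassified by `σ`, so on the event
`#S ≥ n α_i / 2` the distance is at most `4‖K‖₁/(n α_i)` times the number of misclassified points,
whose expectation is at most `n φ_n(σ)`. The complementary event has probability at most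
`exp(-n α_i² / 2)` by Hoeffding's inequality. The triangle inequality through `f̄_i` concludes.
-/

open MeasureTheory ProbabilityTheory Finset
open scoped symmDiff

section RescaledKernel

variable {K K' : ℝ → ℝ} {h : ℝ}

noncomputable def rescaledKernel (K : ℝ → ℝ) (h y t : ℝ) : ℝ := h⁻¹ * K ((t - y) / h)

lemma integrable_rescaledKernel (hK : Integrable K) (hh : h ≠ 0) (y : ℝ) :
    Integrable (rescaledKernel K h y) :=
  ((hK.comp_div hh).comp_sub_right y).const_mul _

lemma integral_abs_rescaledKernel (hh : h ≠ 0) (y : ℝ) :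
    ∫ t, |rescaledKernel K h y t| = ∫ t, |K t| := by
  simp only [rescaledKernel, abs_mul, integral_const_mul]
  rw [integral_sub_right_eq_self (fun t => |K (t / h)|) y,
    Measure.integral_comp_div (fun t => |K t|) h, smul_eq_mul, ← mul_assoc, abs_inv,
    inv_mul_cancel₀ (abs_ne_zero.2 hh), one_mul]

lemma rescaledKernel_ae_eq (hKK' : K =ᵐ[volume] K') (hh : h ≠ 0) (y : ℝ) :
    rescaledKernel K h y =ᵐ[volume] rescaledKernel K' h y := by
  have hq : Measure.QuasiMeasurePreserving (fun t : ℝ => (t - y) / h) := by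
    simpa [Function.comp_def, smul_eq_mul, div_eq_inv_mul] using
      (Measure.quasiMeasurePreserving_smul volume (inv_ne_zero hh)).comp
        (measurePreserving_sub_right volume y).quasiMeasurePreserving
  filter_upwards [hq.ae_eq_comp hKK'] with t ht
  exact congrArg (h⁻¹ * ·) ht

end RescaledKernel

section Average

variable {ι : Type*} [DecidableEq ι]

lemma abs_card_sub_card_le_card_symmDiff (S T : Finset ι) :
    |(#T : ℝ) - #S| ≤ #(S ∆ T) := by
  have hT : #T ≤ #(S ∆ T) + #S :=
    card_le_card_sdiff_add_card.trans (by gcongr; exact symmDiff_subset_sdiff')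
  have hS : #S ≤ #(S ∆ T) + #T :=
    card_le_card_sdiff_add_card.trans (by gcongr; exact symmDiff_subset_sdiff)
  rw [abs_sub_le_iff]
  constructor <;> linarith [(Nat.cast_le (α := ℝ)).2 hT, (Nat.cast_le (α := ℝ)).2 hS,
    Nat.cast_add (R := ℝ) #(S ∆ T) #S, Nat.cast_add (R := ℝ) #(S ∆ T) #T]

variable [Fintype ι]

lemma sum_abs_ite_inv_card_le (S : Finset ι) :
    ∑ k, |if k ∈ S then (#S : ℝ)⁻¹ else 0| ≤ 1 := by
  rcases S.eq_empty_or_nonempty with rfl | hS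
  · simp
  · simp [apply_ite, hS.card_ne_zero]

lemma sum_abs_ite_inv_card_sub_le (S T : Finset ι) (hT : T.Nonempty) :
    ∑ k, |(if k ∈ S then (#S : ℝ)⁻¹ else 0) - (if k ∈ T then (#T : ℝ)⁻¹ else 0)|
      ≤ 2 * #(S ∆ T) / #T := by
  set s : ℝ := (#S : ℝ)
  set t : ℝ := (#T : ℝ)
  have ht : 0 < t := by simp [t, hT.card_pos]
  have hs : 0 ≤ s := by positivity
  -- `s⁻¹ 1_S - t⁻¹ 1_T = t⁻¹ (1_S - 1_T) + (s⁻¹ - t⁻¹) 1_S`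
  have hpt : ∀ k, |(if k ∈ S then s⁻¹ else 0) - (if k ∈ T then t⁻¹ else 0)|
      ≤ (if k ∈ S ∆ T then t⁻¹ else 0) + (if k ∈ S then |s⁻¹ - t⁻¹| else 0) := by
    intro k
    by_cases hkS : k ∈ S <;> by_cases hkT : k ∈ T <;>
      simp [hkS, hkT, mem_symmDiff, abs_of_pos ht, abs_of_nonneg hs]
    linarith [le_abs_self (s⁻¹ - t⁻¹)]
  have hscale : s * |s⁻¹ - t⁻¹| ≤ |t - s| / t := by
    rcases eq_or_ne s 0 with hs0 | hs0
    · simp [hs0]; positivity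
    · refine le_of_eq ?_
      calc s * |s⁻¹ - t⁻¹| = |s * (s⁻¹ - t⁻¹)| := by rw [abs_mul, abs_of_nonneg hs]
        _ = |t - s| / t := by rw [show s * (s⁻¹ - t⁻¹) = (t - s) / t by field_simp, abs_div,
            abs_of_pos ht]
  calc _ ≤ ∑ k, ((if k ∈ S ∆ T then t⁻¹ else 0) + (if k ∈ S then |s⁻¹ - t⁻¹| else 0)) :=
        sum_le_sum fun k _ => hpt k
    _ = #(S ∆ T) / t + s * |s⁻¹ - t⁻¹| := by
        simp [sum_add_distrib, s, div_eq_mul_inv]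
    _ ≤ #(S ∆ T) / t + #(S ∆ T) / t := by
        gcongr
        exact hscale.trans (by gcongr; exact abs_card_sub_card_le_card_symmDiff S T)
    _ = 2 * #(S ∆ T) / #T := by ring

variable {α : Type*} [MeasurableSpace α] {μ : Measure α} {κ : ι → α → ℝ} {L : ℝ}

omit [DecidableEq ι] in
lemma integral_abs_sum_mul_le (hκ : ∀ k, Integrable (κ k) μ)
    (hL : ∀ k, ∫ x, |κ k x| ∂μ ≤ L) (c : ι → ℝ) :
    ∫ x, |∑ k, c k * κ k x| ∂μ ≤ L * ∑ k, |c k| := by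
  have hint : ∀ k, Integrable (fun x => |c k * κ k x|) μ := fun k => ((hκ k).const_mul _).abs
  calc ∫ x, |∑ k, c k * κ k x| ∂μ ≤ ∫ x, ∑ k, |c k * κ k x| ∂μ :=
        integral_mono (integrable_finsetSum _ fun k _ => ((hκ k).const_mul _)).abs
          (integrable_finsetSum _ fun k _ => hint k) fun x => abs_sum_le_sum_abs _ _
    _ = ∑ k, |c k| * ∫ x, |κ k x| ∂μ := by
        rw [integral_finsetSum _ fun k _ => hint k]
        simp only [abs_mul, integral_const_mul]
    _ ≤ ∑ k, |c k| * L := by gcongr with k; exact hL k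
    _ = L * ∑ k, |c k| := by rw [← sum_mul, mul_comm]

omit [MeasurableSpace α] in
lemma inv_card_mul_sum_eq_sum_ite_mul (S : Finset ι) (x : α) :
    (#S : ℝ)⁻¹ * ∑ k ∈ S, κ k x = ∑ k, (if k ∈ S then (#S : ℝ)⁻¹ else 0) * κ k x := by
  simp [ite_mul, mul_sum]

lemma integral_abs_inv_card_mul_sum_le (hκ : ∀ k, Integrable (κ k) μ)
    (hL : ∀ k, ∫ x, |κ k x| ∂μ ≤ L) (hL0 : 0 ≤ L) (S : Finset ι) :
    ∫ x, |(#S : ℝ)⁻¹ * ∑ k ∈ S, κ k x| ∂μ ≤ L := by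
  simp only [inv_card_mul_sum_eq_sum_ite_mul]
  exact (integral_abs_sum_mul_le hκ hL _).trans
    (mul_le_of_le_one_right hL0 (sum_abs_ite_inv_card_le S))

lemma integral_abs_inv_card_mul_sum_sub_le (hκ : ∀ k, Integrable (κ k) μ)
    (hL : ∀ k, ∫ x, |κ k x| ∂μ ≤ L) (hL0 : 0 ≤ L) (S T : Finset ι) (hT : T.Nonempty) :
    ∫ x, |(#S : ℝ)⁻¹ * ∑ k ∈ S, κ k x - (#T : ℝ)⁻¹ * ∑ k ∈ T, κ k x| ∂μ
      ≤ L * (2 * #(S ∆ T) / #T) := by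
  simp only [inv_card_mul_sum_eq_sum_ite_mul, ← sum_sub_distrib, ← sub_mul]
  exact (integral_abs_sum_mul_le hκ hL _).trans
    (mul_le_mul_of_nonneg_left (sum_abs_ite_inv_card_sub_le S T hT) hL0)

end Average

section KernelDensityEstimate

variable {ι : Type*} [Fintype ι] [DecidableEq ι] {K K' : ℝ → ℝ} {h : ℝ}

/-- For `S = ∅` this is `0` (as `(0 : ℝ)⁻¹ = 0`), which matches the convention `f̄_i ≡ 0` when
`N_i = 0`. -/
noncomputable def kernelDensityEstimate (K : ℝ → ℝ) (h : ℝ) (y : ι → ℝ) (S : Finset ι)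
    (t : ℝ) : ℝ :=
  (#S : ℝ)⁻¹ * ∑ k ∈ S, rescaledKernel K h (y k) t

omit [Fintype ι] [DecidableEq ι] in
lemma integrable_kernelDensityEstimate (hK : Integrable K) (hh : h ≠ 0) (y : ι → ℝ)
    (S : Finset ι) : Integrable (kernelDensityEstimate K h y S) :=
  (integrable_finsetSum _ fun k _ => integrable_rescaledKernel hK hh (y k)).const_mul _

lemma integral_abs_kernelDensityEstimate_le (hK : Integrable K) (hh : h ≠ 0) (y : ι → ℝ)
    (S : Finset ι) : ∫ t, |kernelDensityEstimate K h y S t| ≤ ∫ t, |K t| :=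
  integral_abs_inv_card_mul_sum_le (fun k => integrable_rescaledKernel hK hh (y k))
    (fun k => (integral_abs_rescaledKernel hh (y k)).le) (integral_nonneg fun _ => abs_nonneg _) S

lemma integral_abs_kernelDensityEstimate_sub_le (hK : Integrable K) (hh : h ≠ 0) (y : ι → ℝ)
    (S T : Finset ι) {c : ℝ} (hc : 0 < c) :
    ∫ t, |kernelDensityEstimate K h y S t - kernelDensityEstimate K h y T t|
      ≤ (∫ t, |K t|) * (2 * #(S ∆ T) / c + 2 * if (#T : ℝ) < c then 1 else 0) := by
  have hL0 : 0 ≤ ∫ t, |K t| := integral_nonneg fun _ => abs_nonneg _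
  have hint := integrable_kernelDensityEstimate hK hh y
  split_ifs with hTc
  · calc _ ≤ ∫ t, (|kernelDensityEstimate K h y S t| + |kernelDensityEstimate K h y T t|) :=
          integral_mono ((hint S).sub (hint T)).abs ((hint S).abs.add (hint T).abs)
            fun t => abs_sub _ _
      _ ≤ (∫ t, |K t|) + ∫ t, |K t| := by
          rw [integral_add (hint S).abs (hint T).abs]
          exact add_le_add (integral_abs_kernelDensityEstimate_le hK hh y S)
            (integral_abs_kernelDensityEstimate_le hK hh y T)
      _ ≤ _ := by nlinarith [show (0:ℝ) ≤ 2 * #(S ∆ T) / c by positivity]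
  · rw [not_lt] at hTc
    have hT : T.Nonempty := card_pos.1 (by exact_mod_cast hc.trans_le hTc)
    calc _ ≤ (∫ t, |K t|) * (2 * #(S ∆ T) / #T) :=
          integral_abs_inv_card_mul_sum_sub_le (fun k => integrable_rescaledKernel hK hh (y k))
            (fun k => (integral_abs_rescaledKernel hh (y k)).le) hL0 S T hT
      _ ≤ _ := by
          rw [mul_zero, add_zero]
          gcongr

omit [Fintype ι] [DecidableEq ι] in
lemma kernelDensityEstimate_ae_eq (hKK' : K =ᵐ[volume] K') (hh : h ≠ 0) (y : ι → ℝ)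
    (S : Finset ι) :
    kernelDensityEstimate K h y S =ᵐ[volume] kernelDensityEstimate K' h y S := by
  filter_upwards [ae_all_iff.2 fun k : S => rescaledKernel_ae_eq hKK' hh (y k)] with t ht
  simp only [kernelDensityEstimate]
  congr 1
  exact sum_congr rfl fun k hk => ht ⟨k, hk⟩

omit [Fintype ι] [DecidableEq ι] in
lemma integral_abs_kernelDensityEstimate_sub_congr (hKK' : K =ᵐ[volume] K') {g g' : ℝ → ℝ}
    (hgg' : g =ᵐ[volume] g') (hh : h ≠ 0) (y : ι → ℝ) (S : Finset ι) :
    ∫ t, |kernelDensityEstimate K h y S t - g t|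
      = ∫ t, |kernelDensityEstimate K' h y S t - g' t| :=
  integral_congr_ae (((kernelDensityEstimate_ae_eq hKK' hh y S).sub hgg').fun_comp abs)

lemma measurable_kernelDensityEstimate {Ω : Type*} [MeasurableSpace Ω] (hK : Measurable K)
    {Y : ι → Ω → ℝ} (hY : ∀ k, Measurable (Y k)) {S : Ω → Finset ι}
    (hS : ∀ k, MeasurableSet {ω | k ∈ S ω}) :
    Measurable fun p : Ω × ℝ => kernelDensityEstimate K h (fun k => Y k p.1) (S p.1) p.2 := by
  have hcard : Measurable fun ω => (#(S ω) : ℝ) := by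
    have hsum : ∀ ω, (#(S ω) : ℝ) = ∑ k, if k ∈ S ω then 1 else 0 := fun ω => by simp
    simp_rw [hsum]
    exact Finset.measurable_sum _ fun k _ => Measurable.ite (hS k) measurable_const measurable_const
  simp only [kernelDensityEstimate, inv_card_mul_sum_eq_sum_ite_mul]
  refine Finset.measurable_sum _ fun k _ => Measurable.mul ?_ ?_
  · exact Measurable.ite (measurable_fst (hS k)) (hcard.comp measurable_fst).inv measurable_const
  · exact (hK.comp ((measurable_snd.sub ((hY k).comp measurable_fst)).div_const h)).const_mul _

end KernelDensityEstimate

section Counting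

variable {Ω ι : Type*} [MeasurableSpace Ω] {P : Measure Ω} [Fintype ι]

omit [MeasurableSpace Ω] in
lemma card_filter_eq_sum_indicator (p : ι → Ω → Prop) [∀ k ω, Decidable (p k ω)] (ω : Ω) :
    (#{k | p k ω} : ℝ) = ∑ k, {ω | p k ω}.indicator 1 ω := by
  simp [Set.indicator_apply]

lemma measurable_card_filter {p : ι → Ω → Prop} [∀ k ω, Decidable (p k ω)]
    (hp : ∀ k, MeasurableSet {ω | p k ω}) : Measurable fun ω => (#{k | p k ω} : ℝ) := by
  simp only [card_filter_eq_sum_indicator]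
  exact Finset.measurable_sum _ fun k _ => measurable_const.indicator (hp k)

lemma integrable_card_filter [IsFiniteMeasure P] {p : ι → Ω → Prop} [∀ k ω, Decidable (p k ω)]
    (hp : ∀ k, MeasurableSet {ω | p k ω}) : Integrable (fun ω => (#{k | p k ω} : ℝ)) P := by
  simp only [card_filter_eq_sum_indicator]
  exact integrable_finsetSum _ fun k _ => (integrable_const 1).indicator (hp k)

lemma integral_card_filter [IsFiniteMeasure P] {p : ι → Ω → Prop} [∀ k ω, Decidable (p k ω)]
    (hp : ∀ k, MeasurableSet {ω | p k ω}) :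
    ∫ ω, (#{k | p k ω} : ℝ) ∂P = ∑ k, P.real {ω | p k ω} := by
  simp only [card_filter_eq_sum_indicator]
  rw [integral_finsetSum _ fun k _ => (integrable_const 1).indicator (hp k)]
  exact sum_congr rfl fun k _ => integral_indicator_one (hp k)

lemma measureReal_sum_le_sub_le_exp [IsProbabilityMeasure P] {X : ι → Ω → ℝ}
    (hindep : iIndepFun X P) (hX : ∀ k, Measurable (X k))
    (hX01 : ∀ k ω, X k ω ∈ Set.Icc (0 : ℝ) 1) {a : ℝ} (hmean : ∀ k, P[X k] = a)
    {ε : ℝ} (hε : 0 ≤ ε) :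
    P.real {ω | ∑ k, X k ω ≤ Fintype.card ι * a - ε}
      ≤ Real.exp (-2 * ε ^ 2 / Fintype.card ι) := by
  have hsubG : ∀ k ∈ (univ : Finset ι),
      HasSubgaussianMGF (fun ω => a - X k ω) ((‖a - (a - 1)‖₊ / 2) ^ 2) P := by
    intro k _
    refine hasSubgaussianMGF_of_mem_Icc_of_integral_eq_zero ((hX k).const_sub a).aemeasurable
      (ae_of_all _ fun ω => ?_) ?_
    · have := hX01 k ω
      simp only [Set.mem_Icc] at this ⊢
      constructor <;> linarith
    · rw [integral_sub (integrable_const a)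
        (Integrable.of_mem_Icc 0 1 (hX k).aemeasurable (ae_of_all _ (hX01 k))), hmean k]
      simp
  have hindep' : iIndepFun (fun k ω => a - X k ω) P :=
    hindep.comp (fun _ x => a - x) fun _ => measurable_const.sub measurable_id
  convert HasSubgaussianMGF.measure_sum_ge_le_of_iIndepFun hindep' hsubG hε using 1
  · congr 1
    ext ω
    simp only [Set.mem_ofPred_eq, sum_sub_distrib, sum_const, card_univ, nsmul_eq_mul]
    constructor <;> intro <;> linarith
  · congr 1
    simp only [sub_sub_cancel, nnnorm_one, sum_const, card_univ, nsmul_eq_mul, NNReal.coe_mul,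
      NNReal.coe_natCast, NNReal.coe_pow, NNReal.coe_div, NNReal.coe_one, NNReal.coe_ofNat]
    rw [show (2 : ℝ) * (Fintype.card ι * (1 / 2) ^ 2) = Fintype.card ι / 2 by ring,
      div_div_eq_mul_div]
    ring

lemma measureReal_card_filter_eq_lt_le_exp [IsProbabilityMeasure P] {β : Type*}
    [DecidableEq β] [MeasurableSpace β] [MeasurableSingletonClass β] {I : ι → Ω → β}
    (hindep : iIndepFun I P) (hI : ∀ k, Measurable (I k)) (i : β) {a : ℝ} (ha : 0 ≤ a)
    (hmean : ∀ k, P.real {ω | I k ω = i} = a) :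
    P.real {ω | (#{k | I k ω = i} : ℝ) < Fintype.card ι * a / 2}
      ≤ Real.exp (-Fintype.card ι * a ^ 2 / 2) := by
  set n : ℝ := (Fintype.card ι : ℝ)
  have hind : Measurable (({i} : Set β).indicator (1 : β → ℝ)) :=
    measurable_one.indicator (measurableSet_singleton i)
  have hX : ∀ k ω,
      ({i} : Set β).indicator 1 (I k ω) = {ω | I k ω = i}.indicator (1 : Ω → ℝ) ω :=
    fun k ω => by simp [Set.indicator_apply]
  have hbound := measureReal_sum_le_sub_le_exp
    (X := fun k ω => ({i} : Set β).indicator 1 (I k ω)) (hindep.comp _ fun _ => hind)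
    (fun k => hind.comp (hI k)) (fun k ω => by by_cases h : I k ω = i <;> simp [h]) (a := a)
    (fun k => by
      simp only [hX]
      exact (integral_indicator_one ((hI k) (measurableSet_singleton i))).trans (hmean k))
    (by positivity : 0 ≤ n * a / 2)
  calc _ ≤ P.real {ω | ∑ k, ({i} : Set β).indicator 1 (I k ω) ≤ n * a - n * a / 2} := by
        refine measureReal_mono fun ω hω => ?_
        simp only [Set.mem_ofPred_eq, hX, ← card_filter_eq_sum_indicator] at hω ⊢
        linarith
    _ ≤ Real.exp (-2 * (n * a / 2) ^ 2 / n) := hbound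
    _ = Real.exp (-n * a ^ 2 / 2) := by
        rcases eq_or_ne n 0 with hn | hn
        · simp [hn]
        · congr 1; field_simp

end Counting

lemma filter_eq_symmDiff_filter_eq_subset {ι β : Type*} [Fintype ι] [DecidableEq ι]
    [DecidableEq β] (u v : ι → β) (i : β) :
    ({k | u k = i} : Finset ι) ∆ ({k | v k = i} : Finset ι) ⊆ ({k | u k ≠ v k} : Finset ι) :=
  fun k hk => by
    simp only [mem_symmDiff, mem_filter, mem_univ, true_and] at hk ⊢
    rcases hk with ⟨hu, hv⟩ | ⟨hv, hu⟩ <;> rintro huv <;> simp_all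

section Expectation

variable {Ω : Type*} [MeasurableSpace Ω] {P : Measure Ω} [IsFiniteMeasure P]

lemma integrable_integral_abs_sub {F G : Ω → ℝ → ℝ}
    (hF : Measurable (Function.uncurry F)) (hG : Measurable (Function.uncurry G))
    (hFi : ∀ ω, Integrable (F ω)) (hGi : ∀ ω, Integrable (G ω)) {cF cG : ℝ}
    (hFc : ∀ ω, ∫ t, |F ω t| ≤ cF) (hGc : ∀ ω, ∫ t, |G ω t| ≤ cG) :
    Integrable (fun ω => ∫ t, |F ω t - G ω t|) P := by
  refine Integrable.mono' (integrable_const (cF + cG))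
    ((hF.sub hG).abs.stronglyMeasurable.integral_prod_right').aestronglyMeasurable
    (ae_of_all _ fun ω => ?_)
  rw [Real.norm_of_nonneg (integral_nonneg fun _ => abs_nonneg _)]
  calc ∫ t, |F ω t - G ω t| ≤ ∫ t, (|F ω t| + |G ω t|) :=
        integral_mono ((hFi ω).sub (hGi ω)).abs ((hFi ω).abs.add (hGi ω).abs)
          fun t => abs_sub _ _
    _ ≤ cF + cG := by
        rw [integral_add (hFi ω).abs (hGi ω).abs]
        exact add_le_add (hFc ω) (hGc ω)

lemma integral_integral_abs_sub_le_add {F G : Ω → ℝ → ℝ} {g : ℝ → ℝ}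
    (hF : Measurable (Function.uncurry F)) (hG : Measurable (Function.uncurry G))
    (hg : Measurable g) (hFi : ∀ ω, Integrable (F ω)) (hGi : ∀ ω, Integrable (G ω))
    (hgi : Integrable g) {c : ℝ} (hFc : ∀ ω, ∫ t, |F ω t| ≤ c) (hGc : ∀ ω, ∫ t, |G ω t| ≤ c) :
    ∫ ω, (∫ t, |F ω t - g t|) ∂P
      ≤ ∫ ω, (∫ t, |G ω t - g t|) ∂P + ∫ ω, (∫ t, |F ω t - G ω t|) ∂P := by
  have hg' : Measurable (Function.uncurry fun (_ : Ω) => g) := hg.comp measurable_snd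
  have hgc : ∀ _ : Ω, ∫ t, |g t| ≤ ∫ t, |g t| := fun _ => le_rfl
  have hGg := integrable_integral_abs_sub (P := P) hG hg' hGi (fun _ => hgi) hGc hgc
  have hFG := integrable_integral_abs_sub (P := P) hF hG hFi hGi hFc hGc
  rw [← integral_add hGg hFG]
  refine integral_mono (integrable_integral_abs_sub hF hg' hFi (fun _ => hgi) hFc hgc)
    (hGg.add hFG) fun ω => ?_
  exact (integral_mono ((hFi ω).sub hgi).abs
    (((hGi ω).sub hgi).abs.add ((hFi ω).sub (hGi ω)).abs)
    fun t => by simpa [add_comm] using abs_sub_le (F ω t) (G ω t) (g t)).trans_eq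
    (integral_add ((hGi ω).sub hgi).abs ((hFi ω).sub (hGi ω)).abs)

end Expectation

section TwoStep

variable {Ω ι β : Type*} [MeasurableSpace Ω] {P : Measure Ω} [IsProbabilityMeasure P]
  [Fintype ι] [Nonempty ι] [DecidableEq ι] [DecidableEq β] [MeasurableSpace β]
  [MeasurableEq β] {K : ℝ → ℝ} {h : ℝ} {Y : ι → Ω → ℝ} {I J : ι → Ω → β}

lemma integral_integral_abs_kernelDensityEstimate_sub_le (hKi : Integrable K) (hh : h ≠ 0)
    (hI : ∀ k, Measurable (I k)) (hJ : ∀ k, Measurable (J k)) (hindep : iIndepFun I P) (i : β)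
    {a : ℝ} (ha : 0 < a) (hmean : ∀ k, P.real {ω | I k ω = i} = a) :
    ∫ ω, (∫ t, |kernelDensityEstimate K h (fun k => Y k ω) {k | J k ω = i} t
        - kernelDensityEstimate K h (fun k => Y k ω) {k | I k ω = i} t|) ∂P
      ≤ (∫ t, |K t|) * (4 / (Fintype.card ι * a) * ∑ k, P.real {ω | J k ω ≠ I k ω}
        + 2 * Real.exp (-Fintype.card ι * a ^ 2 / 2)) := by
  set L := ∫ t, |K t|
  set n : ℝ := (Fintype.card ι : ℝ)
  have hn : 0 < n := by simp [n, Fintype.card_pos]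
  have hc : 0 < n * a / 2 := by positivity
  have hJI : ∀ k, MeasurableSet {ω | J k ω ≠ I k ω} :=
    fun k => (measurableSet_eq_fun (hJ k) (hI k)).compl
  set bad := {ω | (#{k | I k ω = i} : ℝ) < n * a / 2}
  have hbad : MeasurableSet bad :=
    measurableSet_lt (measurable_card_filter fun k => (hI k) (measurableSet_singleton i))
      measurable_const
  have hbadi : Integrable (fun ω => bad.indicator (1 : Ω → ℝ) ω) P :=
    (integrable_const (1 : ℝ)).indicator hbad
  have hpt : ∀ ω, ∫ t, |kernelDensityEstimate K h (fun k => Y k ω) {k | J k ω = i} t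
        - kernelDensityEstimate K h (fun k => Y k ω) {k | I k ω = i} t|
      ≤ L * (4 / (n * a) * #{k | J k ω ≠ I k ω} + 2 * bad.indicator 1 ω) := fun ω => by
    refine (integral_abs_kernelDensityEstimate_sub_le hKi hh _ _ _ hc).trans ?_
    rw [show ∀ x : ℝ, 2 * x / (n * a / 2) = 4 / (n * a) * x from fun x => by field_simp; ring]
    simp only [bad, Set.indicator_apply, Set.mem_ofPred_eq, Pi.one_apply]
    gcongr
    exact filter_eq_symmDiff_filter_eq_subset (fun k => J k ω) (fun k => I k ω) i
  have hRi := (((integrable_card_filter hJI).const_mul (4 / (n * a))).add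
    (hbadi.const_mul 2)).const_mul L
  calc _ ≤ ∫ ω, L * (4 / (n * a) * #{k | J k ω ≠ I k ω} + 2 * bad.indicator 1 ω) ∂P :=
        integral_mono_of_nonneg (ae_of_all _ fun _ => integral_nonneg fun _ => abs_nonneg _)
          hRi (ae_of_all _ hpt)
    _ = L * (4 / (n * a) * ∑ k, P.real {ω | J k ω ≠ I k ω} + 2 * P.real bad) := by
        rw [integral_const_mul, integral_add ((integrable_card_filter hJI).const_mul _)
          (hbadi.const_mul 2), integral_const_mul, integral_const_mul, integral_card_filter hJI,
          integral_indicator_one hbad]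
    _ ≤ _ := by
        gcongr
        exact measureReal_card_filter_eq_lt_le_exp hindep hI i ha.le hmean

lemma integral_integral_abs_kernelDensityEstimate_sub_le_add_of_measurable (hK : Measurable K)
    (hKi : Integrable K) (hh : h ≠ 0) {g : ℝ → ℝ} (hg : Measurable g) (hgi : Integrable g)
    (hY : ∀ k, Measurable (Y k)) (hI : ∀ k, Measurable (I k)) (hJ : ∀ k, Measurable (J k))
    (hindep : iIndepFun I P) (i : β) {a : ℝ} (ha : 0 < a)
    (hmean : ∀ k, P.real {ω | I k ω = i} = a) :
    ∫ ω, (∫ t, |kernelDensityEstimate K h (fun k => Y k ω) {k | J k ω = i} t - g t|) ∂P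
      ≤ ∫ ω, (∫ t, |kernelDensityEstimate K h (fun k => Y k ω) {k | I k ω = i} t - g t|) ∂P
        + (∫ t, |K t|) * (4 / (Fintype.card ι * a) * ∑ k, P.real {ω | J k ω ≠ I k ω}
          + 2 * Real.exp (-Fintype.card ι * a ^ 2 / 2)) := by
  have hmeas : ∀ ℓ : ι → Ω → β, (∀ k, Measurable (ℓ k)) → Measurable fun p : Ω × ℝ =>
      kernelDensityEstimate K h (fun k => Y k p.1) {k | ℓ k p.1 = i} p.2 :=
    fun ℓ hℓ => measurable_kernelDensityEstimate (S := fun ω => {k | ℓ k ω = i}) hK hY fun k => by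
      simp only [mem_filter, mem_univ, true_and]
      exact (hℓ k) (measurableSet_singleton i)
  refine (integral_integral_abs_sub_le_add
    (F := fun ω => kernelDensityEstimate K h (fun k => Y k ω) {k | J k ω = i})
    (G := fun ω => kernelDensityEstimate K h (fun k => Y k ω) {k | I k ω = i})
    (hmeas J hJ) (hmeas I hI) hg
    (fun ω => integrable_kernelDensityEstimate hKi hh _ _)
    (fun ω => integrable_kernelDensityEstimate hKi hh _ _) hgi
    (fun ω => integral_abs_kernelDensityEstimate_le hKi hh _ _)
    (fun ω => integral_abs_kernelDensityEstimate_le hKi hh _ _)).trans ?_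
  gcongr
  exact integral_integral_abs_kernelDensityEstimate_sub_le hKi hh hI hJ hindep i ha hmean

theorem integral_integral_abs_kernelDensityEstimate_sub_le_add (hKi : Integrable K)
    (hh : h ≠ 0) {g : ℝ → ℝ} (hgi : Integrable g) (hY : ∀ k, Measurable (Y k))
    (hI : ∀ k, Measurable (I k)) (hJ : ∀ k, Measurable (J k)) (hindep : iIndepFun I P) (i : β)
    {a : ℝ} (ha : 0 < a) (hmean : ∀ k, P.real {ω | I k ω = i} = a) :
    ∫ ω, (∫ t, |kernelDensityEstimate K h (fun k => Y k ω) {k | J k ω = i} t - g t|) ∂P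
      ≤ ∫ ω, (∫ t, |kernelDensityEstimate K h (fun k => Y k ω) {k | I k ω = i} t - g t|) ∂P
        + (∫ t, |K t|) * (4 / (Fintype.card ι * a) * ∑ k, P.real {ω | J k ω ≠ I k ω}
          + 2 * Real.exp (-Fintype.card ι * a ^ 2 / 2)) := by
  obtain ⟨K', hK'm, hKK'⟩ := hKi.aestronglyMeasurable
  obtain ⟨g', hg'm, hgg'⟩ := hgi.aestronglyMeasurable
  have hL : ∫ t, |K t| = ∫ t, |K' t| := integral_congr_ae (hKK'.fun_comp abs)
  simp only [integral_abs_kernelDensityEstimate_sub_congr hKK' hgg' hh, hL]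
  exact integral_integral_abs_kernelDensityEstimate_sub_le_add_of_measurable hK'm.measurable
    (hKi.congr hKK') hh hg'm.measurable (hgi.congr hgg') hY hI hJ hindep i ha hmean

end TwoStep

lemma mul_four_div_add_two_exp_le {L a s φ : ℝ} {n : ℕ} (hL : 0 ≤ L) (ha : 0 < a) (ha1 : a ≤ 1)
    (hn : 1 ≤ n) (hs : s ≤ n * φ) :
    L * (4 / (n * a) * s + 2 * Real.exp (-n * a ^ 2 / 2))
      ≤ 4 * L / a * φ + 2 * Real.sqrt 6 * L / a * Real.exp (-n * a ^ 2 / 4)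
        + L * (1 - a) ^ n := by
  have hn0 : (0 : ℝ) < n := by exact_mod_cast hn
  have hmis : 4 / (n * a) * s ≤ 4 / a * φ :=
    calc _ ≤ 4 / (n * a) * (n * φ) := by gcongr
      _ = 4 / a * φ := by field_simp
  have hexp : 2 * Real.exp (-n * a ^ 2 / 2) ≤ 2 * Real.sqrt 6 / a * Real.exp (-n * a ^ 2 / 4) := by
    gcongr ?_ * ?_
    · rw [le_div_iff₀ ha]
      nlinarith [Real.le_sqrt_of_sq_le (show (1 : ℝ) ^ 2 ≤ 6 by norm_num)]
    · exact Real.exp_le_exp.2 (by nlinarith [sq_nonneg a])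
  have htail : 0 ≤ L * (1 - a) ^ n := mul_nonneg hL (pow_nonneg (by linarith) n)
  have h1 := mul_le_mul_of_nonneg_left hmis hL
  have h2 := mul_le_mul_of_nonneg_left hexp hL
  rw [mul_add]
  ring_nf at h1 h2 ⊢
  linarith

theorem stmt_2_general {Ω : Type*} [MeasurableSpace Ω] (P : Measure Ω) [IsProbabilityMeasure P]
    (n M : ℕ) (hn : 1 ≤ n)
    (Y : Fin n → Ω → ℝ) (I : Fin n → Ω → Fin M) (Ihat : Fin n → Ω → Fin M)
    (hYmeas : ∀ k, Measurable (Y k)) (hImeas : ∀ k, Measurable (I k))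
    (hIhatmeas : ∀ k, Measurable (Ihat k))
    -- the pairs (Y_k, I_k) are i.i.d.
    (hindep : iIndepFun (fun k ω => (Y k ω, I k ω)) P)
    (hident : ∀ k : Fin n,
      Measure.map (fun ω => (Y k ω, I k ω)) P
        = Measure.map (fun ω => (Y ⟨0, hn⟩ ω, I ⟨0, hn⟩ ω)) P)
    -- mixture weights
    (α : Fin M → ℝ) (hα : ∀ i, α i = (P {ω | I ⟨0, hn⟩ ω = i}).toReal)
    (hαpos : ∀ i, 0 < α i)
    -- conditional densities: P(Y₁ ∈ s, I₁ = i) = α_i ∫_s f_i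
    (f : Fin M → ℝ → ℝ)
    (hf : ∀ i, ∀ s : Set ℝ, MeasurableSet s →
      (P ({ω | I ⟨0, hn⟩ ω = i} ∩ (Y ⟨0, hn⟩) ⁻¹' s)).toReal = α i * ∫ t in s, f i t)
    -- kernel and bandwidth
    (K : ℝ → ℝ) (hKint : Integrable K)
    (h : ℝ) (hh : 0 < h)
    (Kh : ℝ → ℝ → ℝ) (hKh : ∀ t y, Kh t y = h⁻¹ * K ((t - y) / h))
    -- counts of true and predicted labels
    (N Nhat : Fin M → Ω → ℕ)
    (hN : ∀ i ω, N i ω = (Finset.univ.filter fun k => I k ω = i).card)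
    (hNhat : ∀ i ω, Nhat i ω = (Finset.univ.filter fun k => Ihat k ω = i).card)
    -- oracle and two-step kernel density estimates
    (fbar fhat : Fin M → Ω → ℝ → ℝ)
    (hfbar : ∀ i ω t, fbar i ω t =
      if N i ω = 0 then 0
      else (N i ω : ℝ)⁻¹ * ∑ k, Kh t (Y k ω) * (if I k ω = i then 1 else 0))
    (hfhat : ∀ i ω t, fhat i ω t =
      (Nhat i ω : ℝ)⁻¹ * ∑ k, Kh t (Y k ω) * (if Ihat k ω = i then 1 else 0))
    -- maximal misclassification error after permutation of the labels
    (φ : Equiv.Perm (Fin M) → ℝ)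
    (hφ : ∀ π, φ π = Finset.univ.sup' ⟨⟨0, hn⟩, Finset.mem_univ _⟩
      (fun k => (P {ω | π (Ihat k ω) ≠ I k ω}).toReal))
    (i : Fin M) :
    Finset.univ.inf' ⟨Equiv.refl (Fin M), Finset.mem_univ _⟩
        (fun π : Equiv.Perm (Fin M) => ∫ ω, (∫ t, |fhat (π i) ω t - f i t|) ∂P)
      ≤ (∫ ω, (∫ t, |fbar i ω t - f i t|) ∂P)
        + 4 * (∫ t, |K t|) / α i
            * Finset.univ.inf' ⟨Equiv.refl (Fin M), Finset.mem_univ _⟩ φ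
        + 2 * Real.sqrt 6 * (∫ t, |K t|) / α i * Real.exp (-(n : ℝ) * (α i) ^ 2 / 4)
        + (∫ t, |K t|) * (1 - α i) ^ n := by
  have : Nonempty (Fin n) := ⟨⟨0, hn⟩⟩
  obtain ⟨σ, -, hσ⟩ := exists_mem_eq_inf' ⟨Equiv.refl (Fin M), mem_univ _⟩ φ
  have hfi : Integrable (f i) := by
    refine Integrable.of_integral_ne_zero fun h0 => (hαpos i).ne' ?_
    simpa [← hα, h0] using hf i Set.univ MeasurableSet.univ
  have hfhat' : ∀ ω, fhat (σ⁻¹ i) ω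
      = kernelDensityEstimate K h (fun k => Y k ω) {k | σ (Ihat k ω) = i} := fun ω => by
    ext t
    simp [hfhat, hNhat, hKh, kernelDensityEstimate, rescaledKernel, sum_filter,
      Equiv.eq_symm_apply]
  have hfbar' : ∀ ω, fbar i ω = kernelDensityEstimate K h (fun k => Y k ω) {k | I k ω = i} :=
    fun ω => by
    ext t
    rw [hfbar, hN]
    split_ifs with h0
    · simp [kernelDensityEstimate, h0]
    · simp [hKh, kernelDensityEstimate, rescaledKernel, sum_filter]
  have hmean : ∀ k, P.real {ω | I k ω = i} = α i := fun k => by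
    have hid : IdentDistrib (I k) (I ⟨0, hn⟩) P P :=
      (IdentDistrib.mk ((hYmeas k).prodMk (hImeas k)).aemeasurable
        ((hYmeas _).prodMk (hImeas _)).aemeasurable (hident k)).comp measurable_snd
    rw [hα, measureReal_def]
    exact congrArg ENNReal.toReal (hid.measure_mem_eq (measurableSet_singleton i))
  have hmis : ∑ k, P.real {ω | σ (Ihat k ω) ≠ I k ω} ≤ n * φ σ := by
    refine (sum_le_card_nsmul _ _ (φ σ) fun k _ => ?_).trans_eq (by simp)
    rw [hφ]
    exact le_sup' (fun k => (P {ω | σ (Ihat k ω) ≠ I k ω}).toReal) (mem_univ k)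
  have hbound := integral_integral_abs_kernelDensityEstimate_sub_le_add hKint hh.ne' hfi hYmeas
    hImeas (J := fun k ω => σ (Ihat k ω)) (fun k => Measurable.of_discrete.comp (hIhatmeas k))
    (hindep.comp (fun _ => Prod.snd) fun _ => measurable_snd) i (hαpos i) hmean
  simp only [Fintype.card_fin, ← hfhat', ← hfbar'] at hbound
  calc _ ≤ ∫ ω, (∫ t, |fhat (σ⁻¹ i) ω t - f i t|) ∂P := inf'_le _ (mem_univ σ⁻¹)
    _ ≤ _ := hbound
    _ ≤ _ := by
      rw [hσ, add_assoc, add_assoc]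
      gcongr
      exact (mul_four_div_add_two_exp_le (integral_nonneg fun _ => abs_nonneg _) (hαpos i)
        ((hα i).trans_le measureReal_le_one) hn hmis).trans_eq (add_assoc _ _ _)

/-- Theorem 1 up to permutation of the cluster indexes (Remark 1): for each component `i`,
`min_{π ∈ Π_M} E‖f̂_{π(i)} − f_i‖₁ ≤ E‖f̄_i − f_i‖₁ + (4‖K‖₁/α_i) min_{π ∈ Π_M} φ_n(π)
 + (2√6 ‖K‖₁/α_i) exp(−n α_i²/4) + ‖K‖₁ (1−α_i)^n`,
where `Π_M` is the set of permutations of the labels and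
`φ_n(π) = max_k P(π(Î_k) ≠ I_k)`. -/
theorem stmt_2 {Ω : Type*} [MeasurableSpace Ω] (P : Measure Ω) [IsProbabilityMeasure P]
    (n M : ℕ) (hn : 1 ≤ n) (hM : 2 ≤ M)
    (Y : Fin n → Ω → ℝ) (I : Fin n → Ω → Fin M) (Ihat : Fin n → Ω → Fin M)
    (hYmeas : ∀ k, Measurable (Y k)) (hImeas : ∀ k, Measurable (I k))
    (hIhatmeas : ∀ k, Measurable (Ihat k))
    -- the pairs (Y_k, I_k) are i.i.d.
    (hindep : iIndepFun (fun k ω => (Y k ω, I k ω)) P)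
    (hident : ∀ k : Fin n,
      Measure.map (fun ω => (Y k ω, I k ω)) P
        = Measure.map (fun ω => (Y ⟨0, hn⟩ ω, I ⟨0, hn⟩ ω)) P)
    -- mixture weights
    (α : Fin M → ℝ) (hα : ∀ i, α i = (P {ω | I ⟨0, hn⟩ ω = i}).toReal)
    (hαpos : ∀ i, 0 < α i)
    -- conditional densities: P(Y₁ ∈ s, I₁ = i) = α_i ∫_s f_i
    (f : Fin M → ℝ → ℝ)
    (hf : ∀ i, ∀ s : Set ℝ, MeasurableSet s →
      (P ({ω | I ⟨0, hn⟩ ω = i} ∩ (Y ⟨0, hn⟩) ⁻¹' s)).toReal = α i * ∫ t in s, f i t)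
    -- kernel and bandwidth
    (K : ℝ → ℝ) (hKint : Integrable K) (hK1 : (∫ t, K t) = 1)
    (h : ℝ) (hh : 0 < h)
    (Kh : ℝ → ℝ → ℝ) (hKh : ∀ t y, Kh t y = h⁻¹ * K ((t - y) / h))
    -- counts of true and predicted labels
    (N Nhat : Fin M → Ω → ℕ)
    (hN : ∀ i ω, N i ω = (Finset.univ.filter fun k => I k ω = i).card)
    (hNhat : ∀ i ω, Nhat i ω = (Finset.univ.filter fun k => Ihat k ω = i).card)
    (hNhatpos : ∀ i, ∀ᵐ ω ∂P, 1 ≤ Nhat i ω)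
    -- oracle and two-step kernel density estimates
    (fbar fhat : Fin M → Ω → ℝ → ℝ)
    (hfbar : ∀ i ω t, fbar i ω t =
      if N i ω = 0 then 0
      else (N i ω : ℝ)⁻¹ * ∑ k, Kh t (Y k ω) * (if I k ω = i then 1 else 0))
    (hfhat : ∀ i ω t, fhat i ω t =
      (Nhat i ω : ℝ)⁻¹ * ∑ k, Kh t (Y k ω) * (if Ihat k ω = i then 1 else 0))
    -- maximal misclassification error after permutation of the labels
    (φ : Equiv.Perm (Fin M) → ℝ)
    (hφ : ∀ π, φ π = Finset.univ.sup' ⟨⟨0, hn⟩, Finset.mem_univ _⟩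
      (fun k => (P {ω | π (Ihat k ω) ≠ I k ω}).toReal))
    (i : Fin M) :
    Finset.univ.inf' ⟨Equiv.refl (Fin M), Finset.mem_univ _⟩
        (fun π : Equiv.Perm (Fin M) => ∫ ω, (∫ t, |fhat (π i) ω t - f i t|) ∂P)
      ≤ (∫ ω, (∫ t, |fbar i ω t - f i t|) ∂P)
        + 4 * (∫ t, |K t|) / α i
            * Finset.univ.inf' ⟨Equiv.refl (Fin M), Finset.mem_univ _⟩ φ
        + 2 * Real.sqrt 6 * (∫ t, |K t|) / α i * Real.exp (-(n : ℝ) * (α i) ^ 2 / 4)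
        + (∫ t, |K t|) * (1 - α i) ^ n :=
  stmt_2_general P n M hn Y I Ihat hYmeas hImeas hIhatmeas hindep hident α hα hαpos f hf K hKint h
    hh Kh hKh N Nhat hN hNhat fbar fhat hfbar hfhat φ hφ i
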